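/- arXiv:1502.00371 — 2 statements merged into one kernel-verified Lean document; each statement's English description precedes it below -/
import Mathlib

section
/- Let f: ℝⁿ → ℝⁿ satisfy the one-sided condition (u − v)ᵀ(f(u) − f(v)) ≥ σ(u − v)ᵀ(u − v) for all u, v ∈ ℝⁿ and some constant σ ∈ ℝ. Let u, v solve u' = f(u) + θ, v' = f(v) + ϑ with constant inputs. Then for any μ > 0 with 2σ − μ ≠ 0 and all t ≥ 0: ‖u(t) − v(t)‖² ≥ exp((2σ − μ)t)·‖u₀ − v₀‖² − (‖θ − ϑ‖²/μ)·(exp((2σ − μ)t) − 1)/(2σ − μ). -/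
/-!
The one-sided bound on `f` and Young's inequality `2⟪w, θ - ϑ⟫ ≥ -μ‖w‖² - ‖θ - ϑ‖² / μ` give
the differential inequality `g' ≥ (2σ - μ) g - ‖θ - ϑ‖² / μ` for `g = ‖u - v‖²`. Grönwall's
inequality applied to `-g` turns it into the stated lower bound.
-/

open Set
open scoped RealInnerProductSpace

theorem neg_gronwallBound_le_of_deriv_right_ge {g g' : ℝ → ℝ} {K ε a b : ℝ}
    (hg : ContinuousOn g (Icc a b))
    (hg' : ∀ x ∈ Ico a b, HasDerivWithinAt g (g' x) (Ici x) x)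
    (bound : ∀ x ∈ Ico a b, K * g x - ε ≤ g' x) :
    ∀ x ∈ Icc a b, -gronwallBound (-g a) K ε (x - a) ≤ g x := by
  intro x hx
  have h := le_gronwallBound_of_liminf_deriv_right_le (f := fun x => -g x) (f' := fun x => -g' x)
    (K := K) (ε := ε) hg.neg (fun x hx _ hr => (hg' x hx).neg.liminf_right_slope_le hr) le_rfl
    (fun x hx => by linarith [bound x hx]) x hx
  linarith

section InnerProductSpace

variable {E : Type*} [NormedAddCommGroup E] [InnerProductSpace ℝ E]

theorem neg_le_two_inner_add (x y : E) {μ : ℝ} (hμ : 0 < μ) :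
    -(μ * ‖x‖ ^ 2 + ‖y‖ ^ 2 / μ) ≤ 2 * ⟪x, y⟫ := by
  have h : 0 ≤ μ * (μ * ‖x‖ ^ 2 + 2 * ⟪x, y⟫ + ‖y‖ ^ 2 / μ) := by
    calc (0 : ℝ) ≤ ‖μ • x + y‖ ^ 2 := sq_nonneg _
      _ = μ * (μ * ‖x‖ ^ 2 + 2 * ⟪x, y⟫ + ‖y‖ ^ 2 / μ) := by
        rw [norm_add_sq_real, norm_smul, real_inner_smul_left, Real.norm_of_nonneg hμ.le]
        field_simp
  linarith [nonneg_of_mul_nonneg_right h hμ]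

theorem two_inner_sub_add_const_ge {f : E → E} {σ : ℝ}
    (hos : ∀ x y, ⟪x - y, f x - f y⟫ ≥ σ * ‖x - y‖ ^ 2)
    (x y θ ϑ : E) {μ : ℝ} (hμ : 0 < μ) :
    (2 * σ - μ) * ‖x - y‖ ^ 2 - ‖θ - ϑ‖ ^ 2 / μ ≤ 2 * ⟪x - y, (f x + θ) - (f y + ϑ)⟫ := by
  rw [add_sub_add_comm, inner_add_right]
  linarith [hos x y, neg_le_two_inner_add (x - y) (θ - ϑ) hμ]

end InnerProductSpace

theorem stmt1 {n : ℕ} (f : EuclideanSpace ℝ (Fin n) → EuclideanSpace ℝ (Fin n))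
    (σ : ℝ)
    (hos : ∀ x y : EuclideanSpace ℝ (Fin n), ⟪x - y, f x - f y⟫ ≥ σ * ‖x - y‖ ^ 2)
    (θ ϑ : EuclideanSpace ℝ (Fin n))
    (u v : ℝ → EuclideanSpace ℝ (Fin n))
    (hu : ∀ t, 0 ≤ t → HasDerivAt u (f (u t) + θ) t)
    (hv : ∀ t, 0 ≤ t → HasDerivAt v (f (v t) + ϑ) t) :
    ∀ μ : ℝ, 0 < μ → 2 * σ - μ ≠ 0 → ∀ t, 0 ≤ t →
      ‖u t - v t‖ ^ 2 ≥
        Real.exp ((2 * σ - μ) * t) * ‖u 0 - v 0‖ ^ 2 -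
          (‖θ - ϑ‖ ^ 2 / μ) * ((Real.exp ((2 * σ - μ) * t) - 1) / (2 * σ - μ)) := by
  intro μ hμ hK t ht
  have hderiv : ∀ x, 0 ≤ x → HasDerivAt (fun s => ‖u s - v s‖ ^ 2)
      (2 * ⟪u x - v x, (f (u x) + θ) - (f (v x) + ϑ)⟫) x :=
    fun x hx => ((hu x hx).sub (hv x hx)).norm_sq
  have h := neg_gronwallBound_le_of_deriv_right_ge (K := 2 * σ - μ) (ε := ‖θ - ϑ‖ ^ 2 / μ)
    (fun x hx => (hderiv x hx.1).continuousAt.continuousWithinAt)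
    (fun x hx => (hderiv x hx.1).hasDerivWithinAt)
    (fun x _ => two_inner_sub_add_const_ge hos (u x) (v x) θ ϑ hμ) t ⟨ht, le_rfl⟩
  rw [gronwallBound_of_K_ne_0 hK, sub_zero] at h
  rw [ge_iff_le, ← mul_div_assoc, mul_div_right_comm]
  linarith
end

section
/- Suppose a nonnegative continuous function z : [t₀, ∞) → ℝ satisfies z(t₀) = 0 and z(t) ≤ K·(e^{L(t−t₀)} − 1) for constants K, L > 0. Let a, b > 0 and define t* = inf{t ≥ t₀ : z(t) ≥ a e^{−bt}}. Then t* − t₀ ≥ (1/L)·log(1 + (a e^{−b t*})/K) > 0; in particular the next event time under the threshold a e^{−bt} is strictly later than t₀. -/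
theorem stmt13 (z : ℝ → ℝ) (t0 K L a b : ℝ)
    (hz_cont : Continuous z) (hz_nn : ∀ t, t0 ≤ t → 0 ≤ z t)
    (hz0 : z t0 = 0) (hK : 0 < K) (hL : 0 < L)
    (hbound : ∀ t, t0 ≤ t → z t ≤ K * (Real.exp (L * (t - t0)) - 1))
    (ha : 0 < a) (hb : 0 < b)
    (hne : {t : ℝ | t0 ≤ t ∧ a * Real.exp (-b * t) ≤ z t}.Nonempty) :
    (1 / L) * Real.log (1 + a * Real.exp (-b * sInf {t : ℝ | t0 ≤ t ∧ a * Real.exp (-b * t) ≤ z t}) / K) ≤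
        sInf {t : ℝ | t0 ≤ t ∧ a * Real.exp (-b * t) ≤ z t} - t0 ∧
    0 < (1 / L) * Real.log (1 + a * Real.exp (-b * sInf {t : ℝ | t0 ≤ t ∧ a * Real.exp (-b * t) ≤ z t}) / K) := by
  set S := {t : ℝ | t0 ≤ t ∧ a * Real.exp (-b * t) ≤ z t} with hS
  have hclosed : IsClosed S := by
    have : S = {t : ℝ | t0 ≤ t} ∩ {t : ℝ | a * Real.exp (-b * t) ≤ z t} := rfl
    rw [this]
    exact (isClosed_le continuous_const continuous_id).inter
      (isClosed_le (by continuity) hz_cont)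
  have hbdd : BddBelow S := ⟨t0, fun t ht => ht.1⟩
  have hmem : sInf S ∈ S := hclosed.csInf_mem hne hbdd
  set t := sInf S with ht
  obtain ⟨ht0, hthr⟩ := hmem
  have hexp : 0 < a * Real.exp (-b * t) := by positivity
  have h1 : a * Real.exp (-b * t) ≤ K * (Real.exp (L * (t - t0)) - 1) :=
    hthr.trans (hbound t ht0)
  have h2 : 1 + a * Real.exp (-b * t) / K ≤ Real.exp (L * (t - t0)) := by
    rw [add_comm, ← le_sub_iff_add_le, div_le_iff₀ hK]
    nlinarith [h1]
  have hpos1 : (1:ℝ) < 1 + a * Real.exp (-b * t) / K := by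
    have : 0 < a * Real.exp (-b * t) / K := by positivity
    linarith
  have hlog : Real.log (1 + a * Real.exp (-b * t) / K) ≤ L * (t - t0) := by
    calc Real.log (1 + a * Real.exp (-b * t) / K) ≤ Real.log (Real.exp (L * (t - t0))) :=
          Real.log_le_log (by linarith) h2
      _ = L * (t - t0) := Real.log_exp _
  have hlogpos : 0 < Real.log (1 + a * Real.exp (-b * t) / K) := Real.log_pos hpos1
  constructor
  · rw [div_mul_eq_mul_div, div_le_iff₀ hL, one_mul]
    linarith [hlog]
  · positivity
end
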